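/- arXiv:1611.06016 — 2 statements merged into one kernel-verified Lean document; each statement's English description precedes it below -/
import Mathlib

section
/- Let θ : ℝ^d × ℝ^d → ℂ be a scalar 2-cocycle. Then there exists a function λ : ℝ^d → ℂ with |λ(x)| = 1, λ(0) = 1, λ(−x) = λ(x) and λ(x)² = θ(x,−x) for all x ∈ ℝ^d (for instance a pointwise square root of x ↦ θ(x,−x)), such that the cohomologous cocycle θ̃(x,y) := θ(x,y)·λ(x+y)·λ(x)⁻¹·λ(y)⁻¹ satisfies θ̃(x,−x) = 1 for all x ∈ ℝ^d. -/
/-! A normalized cocycle satisfies `θ(x,−x) = θ(−x,x)` (the cocycle identity at `(x,−x,x)`),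
so a pointwise square root `λ(x) = θ(x,−x)^{1/2}` is even, and then the modified cocycle at
`(x,−x)` is `λ(x)² · λ(0) · λ(x)⁻² = 1`. -/

section Cocycle

variable {G M : Type*} [AddGroup G]

theorem cocycle_apply_neg_eq_apply_neg_self [MulOneClass M] {θ : G → G → M}
    (hcoc : ∀ x y z, θ x y * θ (x + y) z = θ y z * θ x (y + z))
    (hnorm : ∀ x, θ x 0 = 1 ∧ θ 0 x = 1) (x : G) :
    θ x (-x) = θ (-x) x := by
  simpa only [add_neg_cancel, neg_add_cancel, (hnorm x).1, (hnorm x).2, mul_one]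
    using hcoc x (-x) x

theorem mul_coboundary_apply_neg_eq_one [CommGroupWithZero M] {θ : G → G → M} {lam : G → M}
    (hne : ∀ x, lam x ≠ 0) (hzero : lam 0 = 1) (heven : ∀ x, lam (-x) = lam x)
    (hsq : ∀ x, lam x ^ 2 = θ x (-x)) (x : G) :
    θ x (-x) * lam (x + -x) * (lam x)⁻¹ * (lam (-x))⁻¹ = 1 := by
  rw [add_neg_cancel, hzero, heven, ← hsq, mul_one, mul_assoc, ← mul_inv, ← sq,
    mul_inv_cancel₀ (pow_ne_zero 2 (hne x))]

end Cocycle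

/-- Every scalar 2-cocycle `θ` on `ℝ^d` is cohomologous to a cocycle `θ̃`
with `θ̃(x,−x) = 1`: there is a unit-modulus function `λ` with `λ(0) = 1`, `λ(−x) = λ(x)`
and `λ(x)² = θ(x,−x)`, such that `θ̃(x,y) = θ(x,y)·λ(x+y)·λ(x)⁻¹·λ(y)⁻¹` satisfies
`θ̃(x,−x) = 1` for all `x`. -/
theorem scalar_cocycle_cohomologous_trivial_on_antidiagonal (d : ℕ)
    (θ : EuclideanSpace ℝ (Fin d) → EuclideanSpace ℝ (Fin d) → ℂ)
    (hunit : ∀ x y, ‖θ x y‖ = 1)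
    (hcoc : ∀ x y z, θ x y * θ (x + y) z = θ y z * θ x (y + z))
    (hnorm : ∀ x, θ x 0 = 1 ∧ θ 0 x = 1) :
    ∃ lam : EuclideanSpace ℝ (Fin d) → ℂ,
      (∀ x, ‖lam x‖ = 1) ∧
      lam 0 = 1 ∧
      (∀ x, lam (-x) = lam x) ∧
      (∀ x, (lam x) ^ 2 = θ x (-x)) ∧
      (∀ x, θ x (-x) * lam (x + -x) * (lam x)⁻¹ * (lam (-x))⁻¹ = 1) := by
  set lam : EuclideanSpace ℝ (Fin d) → ℂ := fun x => θ x (-x) ^ ((2 : ℕ)⁻¹ : ℂ)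
  have hsq : ∀ x, lam x ^ 2 = θ x (-x) := fun x => Complex.cpow_nat_inv_pow _ two_ne_zero
  have hunit_lam : ∀ x, ‖lam x‖ = 1 := fun x => by
    simp only [lam, Complex.norm_cpow_inv_nat, hunit, Real.one_rpow]
  have heven : ∀ x, lam (-x) = lam x := fun x => by
    simp only [lam, neg_neg, cocycle_apply_neg_eq_apply_neg_self hcoc hnorm x]
  have hzero : lam 0 = 1 := by
    simp only [lam, neg_zero, (hnorm 0).1, Complex.one_cpow]
  have hne : ∀ x, lam x ≠ 0 := fun x =>
    norm_ne_zero_iff.mp (by rw [hunit_lam x]; exact one_ne_zero)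
  exact ⟨lam, hunit_lam, hzero, heven, hsq,
    mul_coboundary_apply_neg_eq_one hne hzero heven hsq⟩
end

section
/- Let d be a positive integer, m a natural number, s a real number with s > d, θ : ℝ^d × ℝ^d → ℂ measurable with |θ(x,y)| = 1 for all x,y, and f : ℝ^d → ℂ continuous with compact support. Define the kernel k_m(x,y) = θ(x,y)·(‖x‖−‖y‖)^m·f(x−y)·(1+‖y‖²)^{−s/4} on ℝ^d × ℝ^d. Then ∫∫ |k_m(x,y)|² dx dy ≤ C_s·∫_{ℝ^d} ‖u‖^{2m}·|f(u)|² du < ∞, where C_s = ∫_{ℝ^d} (1+‖v‖²)^{−s/2} dv. In particular k_m is square integrable and the corresponding integral operator on L²(ℝ^d) is Hilbert–Schmidt. -/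
/-!
Since `|‖x‖ - ‖y‖| ≤ ‖x - y‖`, the squared modulus of the kernel is dominated by
`φ (x - y) * g y` with `φ u = ‖u‖ ^ (2 * m) * ‖f u‖ ^ 2` and `g v = (1 + ‖v‖ ^ 2) ^ (-s / 2)`.
The shear `(x, y) ↦ (x - y, y)` preserves Lebesgue measure on the product, so this dominating
function integrates to `(∫ g) * (∫ φ)`; `φ` is continuous with compact support and `g` is
integrable because `s > d`.
-/

open MeasureTheory

section ConvolutionDomination

variable {G : Type*} [MeasurableSpace G] [AddGroup G] [MeasurableAdd₂ G]
  {μ ν : Measure G} [μ.IsAddRightInvariant] {φ g : G → ℝ}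

theorem integral_integral_comp_sub_mul (φ g : G → ℝ) :
    ∫ y, ∫ x, φ (x - y) * g y ∂μ ∂ν = (∫ y, g y ∂ν) * ∫ u, φ u ∂μ := by
  simp_rw [integral_mul_const, integral_sub_right_eq_self, integral_const_mul, mul_comm]

variable [MeasurableNeg G] [SFinite μ] [SFinite ν]

theorem integrable_comp_sub_mul (hφ : Integrable φ μ) (hg : Integrable g ν) :
    Integrable (fun p : G × G => φ (p.1 - p.2) * g p.2) (μ.prod ν) :=
  (measurePreserving_sub_prod μ ν).integrable_comp_of_integrable (hφ.mul_prod hg)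

theorem integrable_of_le_comp_sub_mul {F : G × G → ℝ} (hF : AEStronglyMeasurable F (μ.prod ν))
    (hF₀ : ∀ p, 0 ≤ F p) (hle : ∀ x y, F (x, y) ≤ φ (x - y) * g y)
    (hφ : Integrable φ μ) (hg : Integrable g ν) : Integrable F (μ.prod ν) :=
  (integrable_comp_sub_mul hφ hg).mono' hF <| .of_forall fun p => by
    rw [Real.norm_of_nonneg (hF₀ p)]
    exact hle p.1 p.2

theorem integral_integral_le_of_le_comp_sub_mul {F : G × G → ℝ} (hF : Integrable F (μ.prod ν))
    (hle : ∀ x y, F (x, y) ≤ φ (x - y) * g y) (hφ : Integrable φ μ) (hg : Integrable g ν) :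
    ∫ y, ∫ x, F (x, y) ∂μ ∂ν ≤ (∫ y, g y ∂ν) * ∫ u, φ u ∂μ := calc
  ∫ y, ∫ x, F (x, y) ∂μ ∂ν = ∫ p, F p ∂μ.prod ν := (integral_prod_symm F hF).symm
  _ ≤ ∫ p, φ (p.1 - p.2) * g p.2 ∂μ.prod ν :=
    integral_mono hF (integrable_comp_sub_mul hφ hg) fun p => hle p.1 p.2
  _ = ∫ y, ∫ x, φ (x - y) * g y ∂μ ∂ν :=
    integral_prod_symm _ (integrable_comp_sub_mul hφ hg)
  _ = (∫ y, g y ∂ν) * ∫ u, φ u ∂μ := integral_integral_comp_sub_mul φ g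

end ConvolutionDomination

theorem norm_kernel_sq_le {E : Type*} [SeminormedAddCommGroup E] {c : ℂ} (hc : ‖c‖ ≤ 1)
    (z : ℂ) (x y : E) (m : ℕ) (s : ℝ) :
    ‖c * (((‖x‖ - ‖y‖) ^ m : ℝ) : ℂ) * z * (((1 + ‖y‖ ^ 2) ^ (-s / 4) : ℝ) : ℂ)‖ ^ 2
      ≤ ‖x - y‖ ^ (2 * m) * ‖z‖ ^ 2 * (1 + ‖y‖ ^ 2) ^ (-s / 2) := by
  have hw : ((1 + ‖y‖ ^ 2) ^ (-s / 4)) ^ 2 = (1 + ‖y‖ ^ 2) ^ (-s / 2) := by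
    rw [← Real.rpow_mul_natCast (by positivity)]
    ring_nf
  have hdiff : |‖x‖ - ‖y‖| ^ (2 * m) ≤ ‖x - y‖ ^ (2 * m) :=
    pow_le_pow_left₀ (abs_nonneg _) (abs_norm_sub_norm_le x y) _
  simp only [norm_mul, Complex.norm_real, Real.norm_eq_abs, abs_pow, mul_pow]
  rw [abs_of_nonneg (by positivity : (0 : ℝ) ≤ (1 + ‖y‖ ^ 2) ^ (-s / 4)), hw, ← pow_mul,
    mul_comm m 2]
  have hc2 : ‖c‖ ^ 2 * |‖x‖ - ‖y‖| ^ (2 * m) ≤ ‖x - y‖ ^ (2 * m) := by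
    simpa using mul_le_mul (pow_le_one₀ (norm_nonneg c) hc) hdiff (by positivity) zero_le_one
  gcongr

theorem kernel_deriv_hilbertSchmidt_general (d : ℕ) (m : ℕ) (s : ℝ) (hs : (d : ℝ) < s)
    (θ : EuclideanSpace ℝ (Fin d) → EuclideanSpace ℝ (Fin d) → ℂ)
    (hθmeas : Measurable fun p : EuclideanSpace ℝ (Fin d) × EuclideanSpace ℝ (Fin d) =>
      θ p.1 p.2)
    (hθunit : ∀ x y, ‖θ x y‖ = 1)
    (f : EuclideanSpace ℝ (Fin d) → ℂ) (hfc : Continuous f) (hfs : HasCompactSupport f) :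
    -- the double integral bound
    (∫ y : EuclideanSpace ℝ (Fin d), ∫ x : EuclideanSpace ℝ (Fin d),
        ‖θ x y * (((‖x‖ - ‖y‖) ^ m : ℝ) : ℂ) * f (x - y) *
          (((1 + ‖y‖ ^ 2) ^ (-s / 4) : ℝ) : ℂ)‖ ^ 2)
      ≤ (∫ v : EuclideanSpace ℝ (Fin d), (1 + ‖v‖ ^ 2) ^ (-s / 2)) *
        ∫ u : EuclideanSpace ℝ (Fin d), ‖u‖ ^ (2 * m) * ‖f u‖ ^ 2 ∧
    -- the right-hand side is finite
    Integrable (fun u : EuclideanSpace ℝ (Fin d) => ‖u‖ ^ (2 * m) * ‖f u‖ ^ 2) volume ∧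
    -- square integrability of the kernel: the integral operator is Hilbert–Schmidt
    MemLp
      (fun p : EuclideanSpace ℝ (Fin d) × EuclideanSpace ℝ (Fin d) =>
        θ p.1 p.2 * (((‖p.1‖ - ‖p.2‖) ^ m : ℝ) : ℂ) * f (p.1 - p.2) *
          (((1 + ‖p.2‖ ^ 2) ^ (-s / 4) : ℝ) : ℂ)) 2 volume := by
  have hφ : Integrable (fun u : EuclideanSpace ℝ (Fin d) => ‖u‖ ^ (2 * m) * ‖f u‖ ^ 2) volume :=
    Continuous.integrable_of_hasCompactSupport (by fun_prop)
      (hfs.comp_left (g := fun z : ℂ => ‖z‖ ^ 2) (by simp)).mul_left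
  have hg : Integrable (fun v : EuclideanSpace ℝ (Fin d) => (1 + ‖v‖ ^ 2) ^ (-s / 2)) volume :=
    integrable_rpow_neg_one_add_norm_sq (by rwa [finrank_euclideanSpace_fin])
  have hk : Measurable fun p : EuclideanSpace ℝ (Fin d) × EuclideanSpace ℝ (Fin d) =>
      θ p.1 p.2 * (((‖p.1‖ - ‖p.2‖) ^ m : ℝ) : ℂ) * f (p.1 - p.2) *
        (((1 + ‖p.2‖ ^ 2) ^ (-s / 4) : ℝ) : ℂ) := by
    fun_prop
  have hle (x y : EuclideanSpace ℝ (Fin d)) :=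
    norm_kernel_sq_le (hθunit x y).le (f (x - y)) x y m s
  have hk2 := integrable_of_le_comp_sub_mul (hk.aestronglyMeasurable.norm.pow 2)
    (fun _ => sq_nonneg _) hle hφ hg
  exact ⟨integral_integral_le_of_le_comp_sub_mul hk2 hle hφ hg, hφ,
    (memLp_two_iff_integrable_sq_norm hk.aestronglyMeasurable).2 hk2⟩

/-- For `s > d`, `m ∈ ℕ`, a unit-modulus measurable twist `θ` and a compactly
supported continuous `f`, the kernel `k_m(x,y) = θ(x,y)·(‖x‖−‖y‖)^m·f(x−y)·(1+‖y‖²)^{−s/4}`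
satisfies `∫∫ |k_m(x,y)|² dx dy ≤ C_s·∫ ‖u‖^{2m}·|f(u)|² du` with
`C_s = ∫ (1+‖v‖²)^{−s/2} dv`, and in particular `k_m` is square integrable (the corresponding
integral operator on `L²(ℝ^d)` is Hilbert–Schmidt). -/
theorem kernel_deriv_hilbertSchmidt (d : ℕ) (hd : 0 < d) (m : ℕ) (s : ℝ) (hs : (d : ℝ) < s)
    (θ : EuclideanSpace ℝ (Fin d) → EuclideanSpace ℝ (Fin d) → ℂ)
    (hθmeas : Measurable fun p : EuclideanSpace ℝ (Fin d) × EuclideanSpace ℝ (Fin d) =>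
      θ p.1 p.2)
    (hθunit : ∀ x y, ‖θ x y‖ = 1)
    (f : EuclideanSpace ℝ (Fin d) → ℂ) (hfc : Continuous f) (hfs : HasCompactSupport f) :
    -- the double integral bound
    (∫ y : EuclideanSpace ℝ (Fin d), ∫ x : EuclideanSpace ℝ (Fin d),
        ‖θ x y * (((‖x‖ - ‖y‖) ^ m : ℝ) : ℂ) * f (x - y) *
          (((1 + ‖y‖ ^ 2) ^ (-s / 4) : ℝ) : ℂ)‖ ^ 2)
      ≤ (∫ v : EuclideanSpace ℝ (Fin d), (1 + ‖v‖ ^ 2) ^ (-s / 2)) *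
        ∫ u : EuclideanSpace ℝ (Fin d), ‖u‖ ^ (2 * m) * ‖f u‖ ^ 2 ∧
    -- the right-hand side is finite
    Integrable (fun u : EuclideanSpace ℝ (Fin d) => ‖u‖ ^ (2 * m) * ‖f u‖ ^ 2) volume ∧
    -- square integrability of the kernel: the integral operator is Hilbert–Schmidt
    MemLp
      (fun p : EuclideanSpace ℝ (Fin d) × EuclideanSpace ℝ (Fin d) =>
        θ p.1 p.2 * (((‖p.1‖ - ‖p.2‖) ^ m : ℝ) : ℂ) * f (p.1 - p.2) *
          (((1 + ‖p.2‖ ^ 2) ^ (-s / 4) : ℝ) : ℂ)) 2 volume :=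
  kernel_deriv_hilbertSchmidt_general d m s hs θ hθmeas hθunit f hfc hfs
end
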